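/- arXiv:nlin/0412029 — 11 statements merged into one kernel-verified Lean document; each statement's English description precedes it below -/
import Mathlib

section
/- Let G : ℝ → ℝ be an odd function satisfying the functional equation (FE), such that G is twice differentiable with continuous second derivative at every x ≠ 0, and the one-sided limits of G''(x) as x → 0+ and x → 0− exist and are finite. Then either there exists a real constant A with G(x) = A·x for all x, or there exist real constants A, B with G(x) = A·sgn(x)(1 − e^{−B|x|}) for all x. -/
open Real

/-- A function `G : ℝ → ℝ` satisfies the functional equation (FE) if it is
differentiable and for all `x, y, z` with `x + y + z = 0`,
`G'(x)(G(y)+G(z)) + G'(y)(G(z)+G(x)) + G'(z)(G(x)+G(y)) = 0`. -/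
def FE (G : ℝ → ℝ) : Prop :=
  Differentiable ℝ G ∧ ∀ x y z : ℝ, x + y + z = 0 →
    deriv G x * (G y + G z) + deriv G y * (G z + G x) + deriv G z * (G x + G y) = 0

open Set Filter


lemma const_of_hasDerivAt_zero {f : ℝ → ℝ} {u v : ℝ} (huv : u ≤ v)
    (hc : ContinuousOn f (Set.Icc u v))
    (hd : ∀ x ∈ Set.Ioo u v, HasDerivAt f 0 x) : f u = f v := by
  have hconv : Convex ℝ (Set.Icc u v) := convex_Icc u v
  have hdiff : DifferentiableOn ℝ f (interior (Set.Icc u v)) := by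
    rw [interior_Icc]; exact fun x hx => ((hd x hx).differentiableAt).differentiableWithinAt
  have h1 : MonotoneOn f (Set.Icc u v) := monotoneOn_of_deriv_nonneg hconv hc hdiff (by
    rw [interior_Icc]; intro x hx; rw [(hd x hx).deriv])
  have h2 : AntitoneOn f (Set.Icc u v) := antitoneOn_of_deriv_nonpos hconv hc hdiff (by
    rw [interior_Icc]; intro x hx; rw [(hd x hx).deriv])
  exact le_antisymm (h1 ⟨le_refl u, huv⟩ ⟨huv, le_refl v⟩ huv) (h2 ⟨le_refl u, huv⟩ ⟨huv, le_refl v⟩ huv)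

lemma deriv_even {G : ℝ → ℝ} (hG : Differentiable ℝ G) (hodd : ∀ x : ℝ, G (-x) = -G x)
    (t : ℝ) : deriv G (-t) = deriv G t := by
  have h1 : HasDerivAt (fun s => G (-s)) (deriv G (-t) * (-1)) t :=
    ((hG (-t)).hasDerivAt).comp t (hasDerivAt_neg t)
  have h2 : HasDerivAt (fun s => -G s) (-deriv G t) t := ((hG t).hasDerivAt).neg
  have h3 : HasDerivAt (fun s => G (-s)) (-deriv G t) t := by
    simpa [funext hodd] using h2
  have := h1.unique h3
  linarith

lemma star_id {G : ℝ → ℝ} (hodd : ∀ x : ℝ, G (-x) = -G x)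
    (hFE : (Differentiable ℝ G ∧ ∀ x y z : ℝ, x + y + z = 0 →
      deriv G x * (G y + G z) + deriv G y * (G z + G x) + deriv G z * (G x + G y) = 0))
    (x y : ℝ) :
    deriv G x * (G y - G (x+y)) + deriv G y * (G x - G (x+y))
      + deriv G (x+y) * (G x + G y) = 0 := by
  have h := hFE.2 x y (-(x+y)) (by ring)
  rw [hodd (x+y), deriv_even hFE.1 hodd (x+y)] at h
  linarith

lemma deriv_tendsto_right {G : ℝ → ℝ} (hG : Differentiable ℝ G)
    (h2 : ∀ x : ℝ, x ≠ 0 → DifferentiableAt ℝ (deriv G) x)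
    {Lp : ℝ}
    (hlimp : Filter.Tendsto (deriv (deriv G)) (nhdsWithin 0 (Set.Ioi 0)) (nhds Lp))
    (hG0 : G 0 = 0) :
    Filter.Tendsto (deriv G) (nhdsWithin 0 (Set.Ioi 0)) (nhds (deriv G 0)) := by
  -- get δ with |G''| ≤ M on (0, δ)
  have hev : ∀ᶠ y in nhdsWithin 0 (Set.Ioi 0), |deriv (deriv G) y| ≤ |Lp| + 1 := by
    have : ∀ᶠ z in nhds Lp, |z| ≤ |Lp| + 1 := by
      have : Set.Ioo (Lp - 1) (Lp + 1) ∈ nhds Lp := Ioo_mem_nhds (by linarith) (by linarith)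
      filter_upwards [this] with z hz
      rw [abs_le]
      constructor
      · linarith [neg_abs_le Lp, hz.1]
      · linarith [le_abs_self Lp, hz.2]
    exact hlimp.eventually this
  rw [eventually_nhdsWithin_iff] at hev
  rcases Metric.eventually_nhds_iff.1 hev with ⟨δ, hδ, hδM⟩
  set M := |Lp| + 1 with hM
  have hMpos : 0 < M := by rw [hM]; positivity
  clear_value M
  -- Lipschitz bound for deriv G on (0, δ)
  have hlip : ∀ s t : ℝ, 0 < s → s < t → t < δ → |deriv G t - deriv G s| ≤ M * (t - s) := by
    intro s t hs hst htδ
    have hcont : ContinuousOn (deriv G) (Set.Icc s t) := by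
      intro z hz
      exact ((h2 z (by rcases hz with ⟨h1, _⟩; linarith)).continuousAt).continuousWithinAt
    have hdiff : DifferentiableOn ℝ (deriv G) (Set.Ioo s t) := fun z hz =>
      (h2 z (by rcases hz with ⟨h1, _⟩; linarith)).differentiableWithinAt
    obtain ⟨ξ, hξ, hξeq⟩ := exists_deriv_eq_slope (deriv G) hst hcont hdiff
    have hξmem : 0 < ξ ∧ ξ < δ := ⟨by linarith [hξ.1], by linarith [hξ.2]⟩
    have hb : |deriv (deriv G) ξ| ≤ M := by
      apply hδM (by rw [Real.dist_eq]; rw [sub_zero]; rw [abs_of_pos hξmem.1]; exact hξmem.2)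
      exact hξmem.1
    rw [hξeq] at hb
    rw [abs_div] at hb
    rw [abs_of_pos (by linarith : (0:ℝ) < t - s)] at hb
    have := (div_le_iff₀ (by linarith : (0:ℝ) < t - s)).1 hb
    linarith
  -- slope tends to c
  have hslope : Filter.Tendsto (fun y => G y / y) (nhdsWithin 0 (Set.Ioi 0)) (nhds (deriv G 0)) := by
    have := (hG 0).hasDerivAt
    rw [hasDerivAt_iff_tendsto_slope] at this
    have h := this.mono_left (nhdsWithin_mono 0 (by intro z hz; exact ne_of_gt hz : Set.Ioi 0 ⊆ {(0:ℝ)}ᶜ))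
    apply h.congr'
    filter_upwards [self_mem_nhdsWithin] with y hy
    simp [slope, hG0]
    ring
  -- squeeze
  rw [Metric.tendsto_nhdsWithin_nhds]
  intro ε hε
  rw [Metric.tendsto_nhdsWithin_nhds] at hslope
  obtain ⟨δ₁, hδ₁, hδ₁p⟩ := hslope (ε/2) (by linarith)
  refine ⟨min (min δ δ₁) (ε / (2*M)), lt_min (lt_min hδ hδ₁) (div_pos hε (by linarith)), ?_⟩
  intro y hy hyd
  rw [Real.dist_eq, sub_zero, abs_of_pos hy] at hyd
  have hyδ : y < δ := lt_of_lt_of_le hyd (le_trans (min_le_left _ _) (min_le_left _ _))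
  have hyδ₁ : y < δ₁ := lt_of_lt_of_le hyd (le_trans (min_le_left _ _) (min_le_right _ _))
  have hyε : y < ε / (2*M) := lt_of_lt_of_le hyd (min_le_right _ _)
  have hy0 : (0:ℝ) < y := hy
  have hcontG : ContinuousOn G (Set.Icc 0 y) := hG.continuous.continuousOn
  have hdiffG : DifferentiableOn ℝ G (Set.Ioo 0 y) := hG.differentiableOn
  obtain ⟨ξ, hξ, hξeq⟩ := exists_deriv_eq_slope G hy0 hcontG hdiffG
  have h1 : |deriv G y - deriv G ξ| ≤ M * (y - ξ) ∨ deriv G y = deriv G ξ := by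
    rcases eq_or_lt_of_le (le_of_lt hξ.2) with he | hl
    · right; rw [he]
    · left; exact hlip ξ y hξ.1 hl hyδ
  have hslopeb : |deriv G ξ - deriv G 0| < ε/2 := by
    have h := hδ₁p hy (by rw [Real.dist_eq, sub_zero, abs_of_pos hy0]; exact hyδ₁)
    rw [Real.dist_eq] at h
    rw [hξeq, hG0, sub_zero, sub_zero]
    exact h
  rw [Real.dist_eq]
  have hb2 : M * (y - ξ) ≤ M * y := by nlinarith [hξ.1]
  have hb3 : M * y < ε/2 := by
    have h := (lt_div_iff₀ (by linarith : (0:ℝ) < 2*M)).1 hyε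
    nlinarith [h]
  have htri := abs_sub_le (deriv G y) (deriv G ξ) (deriv G 0)
  rcases h1 with h | h
  · linarith [mul_nonneg hMpos.le hξ.1.le]
  · rw [h] at htri ⊢
    simp only [sub_self, abs_zero, zero_add] at htri
    linarith [abs_nonneg (deriv G ξ - deriv G 0)]

lemma ode_pos {G : ℝ → ℝ} (hodd : ∀ x : ℝ, G (-x) = -G x)
    (hFE : (Differentiable ℝ G ∧ ∀ x y z : ℝ, x + y + z = 0 →
      deriv G x * (G y + G z) + deriv G y * (G z + G x) + deriv G z * (G x + G y) = 0))
    (h2 : ∀ x : ℝ, x ≠ 0 → DifferentiableAt ℝ (deriv G) x)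
    (h2c : ∀ x : ℝ, x ≠ 0 → ContinuousAt (deriv (deriv G)) x)
    {Lp : ℝ}
    (hlimp : Filter.Tendsto (deriv (deriv G)) (nhdsWithin 0 (Set.Ioi 0)) (nhds Lp))
    {x : ℝ} (hx : 0 < x) :
    G x * deriv (deriv G) x = deriv G x * (deriv G x - deriv G 0) := by
  have hG := hFE.1
  have hG0 : G 0 = 0 := by have := hodd 0; simp at this; linarith
  have hD : ∀ y : ℝ, 0 < y →
      deriv G x * (deriv G y - deriv G (x+y))
      + (deriv (deriv G) y * (G x - G (x+y)) + deriv G y * (0 - deriv G (x+y)))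
      + (deriv (deriv G) (x+y) * (G x + G y) + deriv G (x+y) * (0 + deriv G y)) = 0 := by
    intro y hy
    have hGy : HasDerivAt G (deriv G y) y := (hG y).hasDerivAt
    have hGxy : HasDerivAt (fun t => G (x+t)) (deriv G (x+y)) y := by
      have := ((hG (x+y)).hasDerivAt).comp y ((hasDerivAt_id y).const_add x)
      exact this.congr_deriv (mul_one _)
    have hd1 : HasDerivAt (fun t => deriv G x * (G t - G (x+t)))
        (deriv G x * (deriv G y - deriv G (x+y))) y := ((hGy.sub hGxy).const_mul _)
    have hdG : HasDerivAt (deriv G) (deriv (deriv G) y) y := (h2 y (ne_of_gt hy)).hasDerivAt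
    have hdGxy : HasDerivAt (fun t => deriv G (x+t)) (deriv (deriv G) (x+y)) y := by
      have := ((h2 (x+y) (ne_of_gt (by linarith : (0:ℝ) < x + y))).hasDerivAt).comp y
        ((hasDerivAt_id y).const_add x)
      exact this.congr_deriv (mul_one _)
    have hd2 : HasDerivAt (fun t => deriv G t * (G x - G (x+t)))
        (deriv (deriv G) y * (G x - G (x+y)) + deriv G y * (0 - deriv G (x+y))) y :=
      hdG.mul ((hasDerivAt_const y (G x)).sub hGxy)
    have hd3 : HasDerivAt (fun t => deriv G (x+t) * (G x + G t))
        (deriv (deriv G) (x+y) * (G x + G y) + deriv G (x+y) * (0 + deriv G y)) y :=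
      hdGxy.mul ((hasDerivAt_const y (G x)).add hGy)
    have hΦd := (hd1.add hd2).add hd3
    have hzero : (fun t => deriv G x * (G t - G (x+t)) + deriv G t * (G x - G (x+t))
        + deriv G (x+t) * (G x + G t)) = fun _ => (0:ℝ) :=
      funext (fun t => star_id hodd hFE x t)
    replace hΦd : HasDerivAt (fun t => deriv G x * (G t - G (x+t)) + deriv G t * (G x - G (x+t))
        + deriv G (x+t) * (G x + G t)) _ y := hΦd
    rw [hzero] at hΦd
    exact hΦd.unique (hasDerivAt_const y 0)
  set c := deriv G 0 with hc
  set l := nhdsWithin (0:ℝ) (Set.Ioi 0) with hl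
  have taddx : Filter.Tendsto (fun y : ℝ => x + y) l (nhds x) := by
    have : Filter.Tendsto (fun y : ℝ => x + y) (nhds 0) (nhds (x + 0)) :=
      (continuous_const.add continuous_id).tendsto 0
    simpa using this.mono_left nhdsWithin_le_nhds
  have t1 : Filter.Tendsto (deriv G) l (nhds c) := deriv_tendsto_right hG h2 hlimp hG0
  have t2 : Filter.Tendsto (fun y => deriv G (x+y)) l (nhds (deriv G x)) :=
    ((h2 x (ne_of_gt hx)).continuousAt).tendsto.comp taddx
  have t3 : Filter.Tendsto (deriv (deriv G)) l (nhds Lp) := hlimp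
  have t4 : Filter.Tendsto (fun y => G (x+y)) l (nhds (G x)) :=
    (hG.continuous.tendsto x).comp taddx
  have t5 : Filter.Tendsto G l (nhds 0) := by
    have := (hG.continuous.tendsto 0).mono_left (nhdsWithin_le_nhds (s := Set.Ioi (0:ℝ)))
    rwa [hG0] at this
  have t6 : Filter.Tendsto (fun y => deriv (deriv G) (x+y)) l (nhds (deriv (deriv G) x)) :=
    ((h2c x (ne_of_gt hx)).tendsto).comp taddx
  have tE : Filter.Tendsto (fun y =>
      deriv G x * (deriv G y - deriv G (x+y))
      + (deriv (deriv G) y * (G x - G (x+y)) + deriv G y * (0 - deriv G (x+y)))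
      + (deriv (deriv G) (x+y) * (G x + G y) + deriv G (x+y) * (0 + deriv G y))) l
      (nhds (deriv G x * (c - deriv G x)
      + (Lp * (G x - G x) + c * (0 - deriv G x))
      + (deriv (deriv G) x * (G x + 0) + deriv G x * (0 + c)))) := by
    exact (((t1.sub t2).const_mul _).add ((t3.mul ((tendsto_const_nhds).sub t4)).add
      (t1.mul ((tendsto_const_nhds).sub t2)))).add
      ((t6.mul ((tendsto_const_nhds).add t5)).add (t2.mul ((tendsto_const_nhds).add t1)))
  have tE0 : Filter.Tendsto (fun y =>
      deriv G x * (deriv G y - deriv G (x+y))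
      + (deriv (deriv G) y * (G x - G (x+y)) + deriv G y * (0 - deriv G (x+y)))
      + (deriv (deriv G) (x+y) * (G x + G y) + deriv G (x+y) * (0 + deriv G y))) l
      (nhds 0) := by
    apply Filter.Tendsto.congr' _ (tendsto_const_nhds (α := ℝ))
    filter_upwards [self_mem_nhdsWithin] with y hy
    exact (hD y hy).symm
  have hT := tendsto_nhds_unique tE tE0
  linear_combination hT

lemma ratio_deriv {G : ℝ → ℝ} (hodd : ∀ x : ℝ, G (-x) = -G x)
    (hFE : (Differentiable ℝ G ∧ ∀ x y z : ℝ, x + y + z = 0 →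
      deriv G x * (G y + G z) + deriv G y * (G z + G x) + deriv G z * (G x + G y) = 0))
    (h2 : ∀ x : ℝ, x ≠ 0 → DifferentiableAt ℝ (deriv G) x)
    (h2c : ∀ x : ℝ, x ≠ 0 → ContinuousAt (deriv (deriv G)) x)
    {Lp : ℝ}
    (hlimp : Filter.Tendsto (deriv (deriv G)) (nhdsWithin 0 (Set.Ioi 0)) (nhds Lp))
    {x : ℝ} (hx : 0 < x) (hGx : G x ≠ 0) :
    HasDerivAt (fun t => (deriv G t - deriv G 0) / G t) 0 x := by
  have hnum : HasDerivAt (fun t => deriv G t - deriv G 0) (deriv (deriv G) x) x :=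
    ((h2 x (ne_of_gt hx)).hasDerivAt).sub_const _
  have hden : HasDerivAt G (deriv G x) x := (hFE.1 x).hasDerivAt
  have h := hnum.div hden hGx
  refine h.congr_deriv (Eq.symm ?_)
  rw [eq_comm, div_eq_zero_iff]
  left
  linear_combination ode_pos hodd hFE h2 h2c hlimp hx

lemma ratio_eq {G : ℝ → ℝ} (hodd : ∀ x : ℝ, G (-x) = -G x)
    (hFE : (Differentiable ℝ G ∧ ∀ x y z : ℝ, x + y + z = 0 →
      deriv G x * (G y + G z) + deriv G y * (G z + G x) + deriv G z * (G x + G y) = 0))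
    (h2 : ∀ x : ℝ, x ≠ 0 → DifferentiableAt ℝ (deriv G) x)
    (h2c : ∀ x : ℝ, x ≠ 0 → ContinuousAt (deriv (deriv G)) x)
    {Lp : ℝ}
    (hlimp : Filter.Tendsto (deriv (deriv G)) (nhdsWithin 0 (Set.Ioi 0)) (nhds Lp))
    {p q : ℝ} (hp : 0 < p) (hpq : p ≤ q) (hne : ∀ t ∈ Set.Icc p q, G t ≠ 0) :
    (deriv G p - deriv G 0) / G p = (deriv G q - deriv G 0) / G q := by
  apply const_of_hasDerivAt_zero hpq
  · intro t ht
    have htpos : 0 < t := lt_of_lt_of_le hp ht.1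
    exact ((((h2 t (ne_of_gt htpos)).continuousAt).sub continuousAt_const).div
      (hFE.1.continuous.continuousAt) (hne t ht)).continuousWithinAt
  · intro t ht
    exact ratio_deriv hodd hFE h2 h2c hlimp (lt_of_lt_of_le hp (le_of_lt ht.1))
      (hne t ⟨le_of_lt ht.1, le_of_lt ht.2⟩)

lemma solve_k0 {G : ℝ → ℝ} (hG : Differentiable ℝ G) {c u v : ℝ} (huv : u ≤ v)
    (h : ∀ x ∈ Set.Ioo u v, deriv G x = c) :
    G v - c * v = G u - c * u := by
  refine (const_of_hasDerivAt_zero huv (f := fun t => G t - c * t)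
    ((hG.continuous.sub (continuous_const.mul continuous_id)).continuousOn) ?_).symm
  intro x hx
  have := ((hG x).hasDerivAt).sub ((hasDerivAt_id x).const_mul c)
  rw [h x hx] at this
  exact this.congr_deriv (by ring)

lemma solve_k {G : ℝ → ℝ} (hG : Differentiable ℝ G) {c u v k : ℝ} (hk : k ≠ 0) (huv : u ≤ v)
    (h : ∀ x ∈ Set.Ioo u v, deriv G x = c + k * G x) :
    (G v + c/k) * Real.exp (-(k*v)) = (G u + c/k) * Real.exp (-(k*u)) := by
  refine (const_of_hasDerivAt_zero huv
    (f := fun t => (G t + c/k) * Real.exp (-(k*t)))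
    (((hG.continuous.add continuous_const).mul
      ((continuous_const.mul continuous_id).neg.rexp)).continuousOn) ?_).symm
  intro x hx
  have hexp : HasDerivAt (fun t : ℝ => Real.exp (-(k*t))) (Real.exp (-(k*x)) * (-k)) x := by
    have hin : HasDerivAt (fun t : ℝ => -(k*t)) (-k) x := by
      exact (((hasDerivAt_id x).const_mul k)).neg.congr_deriv (by ring)
    exact hin.exp
  have hprod := (((hG x).hasDerivAt).add_const (c/k)).mul hexp
  have heq : deriv G x * Real.exp (-(k*x)) + (G x + c/k) * (Real.exp (-(k*x)) * (-k)) = 0 := by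
    rw [h x hx]
    field_simp
    ring
  rw [heq] at hprod
  exact hprod

lemma set_k {G : ℝ → ℝ} (hodd : ∀ x : ℝ, G (-x) = -G x)
    (hFE : (Differentiable ℝ G ∧ ∀ x y z : ℝ, x + y + z = 0 →
      deriv G x * (G y + G z) + deriv G y * (G z + G x) + deriv G z * (G x + G y) = 0))
    (h2 : ∀ x : ℝ, x ≠ 0 → DifferentiableAt ℝ (deriv G) x)
    (h2c : ∀ x : ℝ, x ≠ 0 → ContinuousAt (deriv (deriv G)) x)
    {Lp : ℝ}
    (hlimp : Filter.Tendsto (deriv (deriv G)) (nhdsWithin 0 (Set.Ioi 0)) (nhds Lp))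
    {S : Set ℝ} (hS : S ⊆ Set.Ioi 0) (hconn : ∀ a ∈ S, ∀ b ∈ S, Set.Icc a b ⊆ S)
    (hne : ∀ t ∈ S, G t ≠ 0) {m : ℝ} (hm : m ∈ S) :
    ∀ x ∈ S, deriv G x = deriv G 0 + ((deriv G m - deriv G 0) / G m) * G x := by
  intro x hx
  have key : (deriv G x - deriv G 0) / G x = (deriv G m - deriv G 0) / G m := by
    rcases le_total x m with h | h
    · exact ratio_eq hodd hFE h2 h2c hlimp (hS hx) h
        (fun t ht => hne t (hconn x hx m hm ht))
    · exact (ratio_eq hodd hFE h2 h2c hlimp (hS hm) h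
        (fun t ht => hne t (hconn m hm x hx ht))).symm
  have hGx := hne x hx
  have hGm := hne m hm
  field_simp at key
  have h3 : (deriv G m - deriv G 0) / G m * G x = deriv G x - deriv G 0 := by
    rw [div_mul_eq_mul_div, div_eq_iff hGm]
    linarith [key]
  linarith [h3]

lemma single_zero_c0 {G : ℝ → ℝ} (hodd : ∀ x : ℝ, G (-x) = -G x)
    (hFE : (Differentiable ℝ G ∧ ∀ x y z : ℝ, x + y + z = 0 →
      deriv G x * (G y + G z) + deriv G y * (G z + G x) + deriv G z * (G x + G y) = 0))
    (h2 : ∀ x : ℝ, x ≠ 0 → DifferentiableAt ℝ (deriv G) x)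
    (h2c : ∀ x : ℝ, x ≠ 0 → ContinuousAt (deriv (deriv G)) x)
    {Lp : ℝ}
    (hlimp : Filter.Tendsto (deriv (deriv G)) (nhdsWithin 0 (Set.Ioi 0)) (nhds Lp))
    (hc : deriv G 0 = 0) {u v : ℝ} (hu : 0 ≤ u) (huv : u < v)
    (hGu : G u = 0) (hne : ∀ t ∈ Set.Ioo u v, G t ≠ 0) : False := by
  have hSsub : Set.Ioo u v ⊆ Set.Ioi 0 := fun t ht => lt_of_le_of_lt hu ht.1
  have hconn : ∀ a ∈ Set.Ioo u v, ∀ b ∈ Set.Ioo u v, Set.Icc a b ⊆ Set.Ioo u v :=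
    fun a ha b hb t ht => ⟨lt_of_lt_of_le ha.1 ht.1, lt_of_le_of_lt ht.2 hb.2⟩
  have hm : (u+v)/2 ∈ Set.Ioo u v := ⟨by linarith, by linarith⟩
  have hk := set_k hodd hFE h2 h2c hlimp hSsub hconn hne hm
  set k := (deriv G ((u+v)/2) - deriv G 0) / G ((u+v)/2) with hkdef
  have hmid : ∀ x ∈ Set.Ioo u ((u+v)/2), deriv G x = 0 + k * G x := by
    intro x hx
    have : x ∈ Set.Ioo u v := ⟨hx.1, by rcases hx with ⟨_, h⟩; linarith⟩
    rw [hk x this, hc]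
  by_cases hk0 : k = 0
  · have hsol := solve_k0 hFE.1 (c := 0) (by linarith : u ≤ (u+v)/2)
      (by intro x hx; rw [hmid x hx, hk0]; ring)
    apply hne ((u+v)/2) hm
    rw [hGu] at hsol; linarith [hsol]
  · have hsol := solve_k hFE.1 (c := 0) hk0 (by linarith : u ≤ (u+v)/2)
      (by intro x hx; rw [hmid x hx])
    simp only [hGu, zero_div, add_zero, zero_add, zero_mul] at hsol
    rcases mul_eq_zero.1 hsol with h | h
    · exact hne ((u+v)/2) hm h
    · exact Real.exp_ne_zero _ h

lemma no_double_zero {G : ℝ → ℝ} (hodd : ∀ x : ℝ, G (-x) = -G x)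
    (hFE : (Differentiable ℝ G ∧ ∀ x y z : ℝ, x + y + z = 0 →
      deriv G x * (G y + G z) + deriv G y * (G z + G x) + deriv G z * (G x + G y) = 0))
    (h2 : ∀ x : ℝ, x ≠ 0 → DifferentiableAt ℝ (deriv G) x)
    (h2c : ∀ x : ℝ, x ≠ 0 → ContinuousAt (deriv (deriv G)) x)
    {Lp : ℝ}
    (hlimp : Filter.Tendsto (deriv (deriv G)) (nhdsWithin 0 (Set.Ioi 0)) (nhds Lp))
    {u v : ℝ} (hu : 0 ≤ u) (huv : u < v)
    (hGu : G u = 0) (hGv : G v = 0) (hne : ∀ t ∈ Set.Ioo u v, G t ≠ 0) : False := by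
  set c := deriv G 0 with hcdef
  by_cases hc : c = 0
  · exact single_zero_c0 hodd hFE h2 h2c hlimp hc hu huv hGu hne
  have hSsub : Set.Ioo u v ⊆ Set.Ioi 0 := fun t ht => lt_of_le_of_lt hu ht.1
  have hconn : ∀ a ∈ Set.Ioo u v, ∀ b ∈ Set.Ioo u v, Set.Icc a b ⊆ Set.Ioo u v :=
    fun a ha b hb t ht => ⟨lt_of_lt_of_le ha.1 ht.1, lt_of_le_of_lt ht.2 hb.2⟩
  have hm : (u+v)/2 ∈ Set.Ioo u v := ⟨by linarith, by linarith⟩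
  have hk := set_k hodd hFE h2 h2c hlimp hSsub hconn hne hm
  set k := (deriv G ((u+v)/2) - deriv G 0) / G ((u+v)/2) with hkdef
  by_cases hk0 : k = 0
  · have := solve_k0 hFE.1 (c := c) (le_of_lt huv)
      (by intro x hx; rw [hk x hx, hk0]; ring)
    rw [hGu, hGv] at this
    have hcvu : c * (v - u) = 0 := by linarith
    rcases mul_eq_zero.1 hcvu with h | h
    · exact hc h
    · linarith
  · have := solve_k hFE.1 (c := c) hk0 (le_of_lt huv)
      (by intro x hx; rw [hk x hx])
    rw [hGu, hGv] at this
    simp only [zero_add] at this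
    have hck : c / k ≠ 0 := div_ne_zero hc hk0
    have he : Real.exp (-(k*v)) = Real.exp (-(k*u)) := mul_left_cancel₀ hck this
    rw [Real.exp_eq_exp, neg_inj] at he
    have := mul_left_cancel₀ hk0 he
    linarith

theorem stmt1 (G : ℝ → ℝ) (hodd : ∀ x : ℝ, G (-x) = -G x) (hFE : FE G)
    (h2 : ∀ x : ℝ, x ≠ 0 → DifferentiableAt ℝ (deriv G) x)
    (h2c : ∀ x : ℝ, x ≠ 0 → ContinuousAt (deriv (deriv G)) x)
    (hlim : ∃ Lp Lm : ℝ,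
      Filter.Tendsto (deriv (deriv G)) (nhdsWithin 0 (Set.Ioi 0)) (nhds Lp) ∧
      Filter.Tendsto (deriv (deriv G)) (nhdsWithin 0 (Set.Iio 0)) (nhds Lm)) :
    (∃ A : ℝ, ∀ x : ℝ, G x = A * x) ∨
    (∃ A B : ℝ, ∀ x : ℝ, G x = A * Real.sign x * (1 - Real.exp (-B * |x|))) := by
  have hFE2 : Differentiable ℝ G ∧ ∀ x y z : ℝ, x + y + z = 0 →
      deriv G x * (G y + G z) + deriv G y * (G z + G x) + deriv G z * (G x + G y) = 0 := hFE
  obtain ⟨Lp, Lm, hlimp, hlimm⟩ := hlim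
  have hG := hFE2.1
  have hG0 : G 0 = 0 := by have := hodd 0; simp at this; linarith
  by_cases hA : ∀ x : ℝ, 0 < x → G x = 0
  · left
    refine ⟨0, fun x => ?_⟩
    rcases lt_trichotomy x 0 with hx | hx | hx
    · have h := hodd (-x); rw [neg_neg] at h
      rw [h, hA (-x) (by linarith)]; ring
    · rw [hx, hG0]; ring
    · rw [hA x hx]; ring
  push_neg at hA
  obtain ⟨a, ha, hGa⟩ := hA
  have hclosed : IsClosed {t : ℝ | G t = 0} := isClosed_eq hG.continuous continuous_const
  set c := deriv G 0 with hc
  -- Stage A : no zeros in (0, a)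
  have stageA : ∀ t ∈ Set.Ioo (0:ℝ) a, G t ≠ 0 := by
    by_contra hcon
    push_neg at hcon
    obtain ⟨t0, ht0, hGt0⟩ := hcon
    set Z := Set.Icc (0:ℝ) a ∩ {t | G t = 0} with hZ
    have hZc : IsClosed Z := isClosed_Icc.inter hclosed
    have hZne : Z.Nonempty := ⟨t0, ⟨⟨le_of_lt ht0.1, le_of_lt ht0.2⟩, hGt0⟩⟩
    have hZbdd : BddAbove Z := ⟨a, fun z hz => hz.1.2⟩
    set p := sSup Z with hp
    have hpZ : p ∈ Z := hZc.csSup_mem hZne hZbdd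
    have hGp : G p = 0 := hpZ.2
    have hp0 : 0 ≤ p := hpZ.1.1
    have hpa : p < a := lt_of_le_of_ne hpZ.1.2 (by intro h; rw [h] at hGp; exact hGa hGp)
    have hnovan : ∀ t ∈ Set.Ioo p a, G t ≠ 0 := by
      intro t ht hGt
      have htZ : t ∈ Z := ⟨⟨le_trans hp0 (le_of_lt ht.1), le_of_lt ht.2⟩, hGt⟩
      exact absurd (le_csSup hZbdd htZ) (not_le.2 ht.1)
    by_cases hc0 : c = 0
    · exact single_zero_c0 hodd hFE2 h2 h2c hlimp hc0 hp0 hpa hGp hnovan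
    have hppos : 0 < p :=
      lt_of_lt_of_le ht0.1 (le_csSup hZbdd ⟨⟨le_of_lt ht0.1, le_of_lt ht0.2⟩, hGt0⟩)
    -- linear relation on (p, a)
    have hSsub : Set.Ioo p a ⊆ Set.Ioi 0 := fun t ht => lt_trans hppos ht.1
    have hconn : ∀ x ∈ Set.Ioo p a, ∀ y ∈ Set.Ioo p a, Set.Icc x y ⊆ Set.Ioo p a :=
      fun x hx y hy t ht => ⟨lt_of_lt_of_le hx.1 ht.1, lt_of_le_of_lt ht.2 hy.2⟩
    have hmm : (p+a)/2 ∈ Set.Ioo p a := ⟨by linarith, by linarith⟩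
    have hk := set_k hodd hFE2 h2 h2c hlimp hSsub hconn hnovan hmm
    set k := (deriv G ((p+a)/2) - deriv G 0) / G ((p+a)/2) with hkdef
    -- deriv G p = c
    have hdpc : deriv G p = c := by
      have h1 : Filter.Tendsto (deriv G) (nhdsWithin p (Set.Ioi p)) (nhds (deriv G p)) :=
        ((h2 p (ne_of_gt hppos)).continuousAt).tendsto.mono_left nhdsWithin_le_nhds
      have h2' : Filter.Tendsto (fun x => c + k * G x) (nhdsWithin p (Set.Ioi p))
          (nhds (c + k * G p)) :=
        tendsto_const_nhds.add (tendsto_const_nhds.mul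
          ((hG.continuous.tendsto p).mono_left nhdsWithin_le_nhds))
      rw [hGp, mul_zero, add_zero] at h2'
      have heq : Filter.Tendsto (deriv G) (nhdsWithin p (Set.Ioi p)) (nhds c) := by
        apply h2'.congr'
        filter_upwards [Ioo_mem_nhdsGT_of_mem ⟨le_refl p, hpa⟩] with t ht
        exact (hk t ht).symm
      exact tendsto_nhds_unique h1 heq
    -- G doesn't vanish near p (punctured)
    have hslope : Filter.Tendsto (slope G p) (nhdsWithin p {p}ᶜ) (nhds c) := by
      have h' := (hG p).hasDerivAt
      rw [hasDerivAt_iff_tendsto_slope, hdpc] at h'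
      exact h'
    have hev : ∀ᶠ x in nhdsWithin p {p}ᶜ, slope G p x ≠ 0 := hslope.eventually_ne hc0
    obtain ⟨δ, hδpos, hδ⟩ := Metric.eventually_nhds_iff.1 (eventually_nhdsWithin_iff.1 hev)
    have hnearnz : ∀ y : ℝ, y ≠ p → dist y p < δ → G y ≠ 0 := by
      intro y hy hyd hGy
      apply hδ hyd hy
      rw [slope_def_field, hGy, hGp]
      simp
    set ρ := min (δ/2) (p/2) with hρ
    have hρpos : 0 < ρ := lt_min (by linarith) (by linarith)
    set r := p - ρ with hr
    have hrpos : 0 < r := by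
      have := min_le_right (δ/2) (p/2); simp only [hr]; linarith
    have hrp : r < p := by simp only [hr]; linarith
    set Z2 := Set.Icc (0:ℝ) r ∩ {t | G t = 0} with hZ2
    have hZ2c : IsClosed Z2 := isClosed_Icc.inter hclosed
    have hZ2ne : Z2.Nonempty := ⟨0, ⟨⟨le_refl 0, le_of_lt hrpos⟩, hG0⟩⟩
    have hZ2bdd : BddAbove Z2 := ⟨r, fun z hz => hz.1.2⟩
    set q := sSup Z2 with hq
    have hqZ : q ∈ Z2 := hZ2c.csSup_mem hZ2ne hZ2bdd
    have hGq : G q = 0 := hqZ.2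
    have hq0 : 0 ≤ q := hqZ.1.1
    have hqr : q ≤ r := hqZ.1.2
    have hqnv : ∀ t ∈ Set.Ioo q p, G t ≠ 0 := by
      intro t ht hGt
      by_cases htr : t ≤ r
      · have htZ : t ∈ Z2 := ⟨⟨le_trans hq0 (le_of_lt ht.1), htr⟩, hGt⟩
        exact absurd (le_csSup hZ2bdd htZ) (not_le.2 ht.1)
      · push_neg at htr
        have ht2 := ht.2
        have hρle : ρ ≤ δ/2 := min_le_left (δ/2) (p/2)
        have htr' : p - ρ < t := by simpa [hr] using htr
        refine hnearnz t (ne_of_lt ht2) ?_ hGt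
        rw [Real.dist_eq, abs_of_neg (by linarith : t - p < 0)]
        linarith
    exact no_double_zero hodd hFE2 h2 h2c hlimp hq0 (lt_of_le_of_lt hqr hrp) hGq hGp hqnv
  -- Stage B : no zeros at all in (0, ∞)
  have hnz : ∀ x : ℝ, 0 < x → G x ≠ 0 := by
    intro b hb hGb
    have hab : a < b := by
      rcases lt_trichotomy b a with h | h | h
      · exact absurd hGb (stageA b ⟨hb, h⟩)
      · rw [h] at hGb; exact (hGa hGb).elim
      · exact h
    set Z3 := Set.Icc a b ∩ {t | G t = 0} with hZ3
    have hZ3c : IsClosed Z3 := isClosed_Icc.inter hclosed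
    have hZ3ne : Z3.Nonempty := ⟨b, ⟨⟨le_of_lt hab, le_refl b⟩, hGb⟩⟩
    have hZ3bdd : BddBelow Z3 := ⟨a, fun z hz => hz.1.1⟩
    set q3 := sInf Z3 with hq3
    have hq3Z : q3 ∈ Z3 := hZ3c.csInf_mem hZ3ne hZ3bdd
    have hGq3 : G q3 = 0 := hq3Z.2
    have hq3a : a < q3 := lt_of_le_of_ne hq3Z.1.1 (by intro h; rw [← h] at hGq3; exact hGa hGq3)
    have hnv : ∀ t ∈ Set.Ioo (0:ℝ) q3, G t ≠ 0 := by
      intro t ht hGt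
      rcases lt_trichotomy t a with h | h | h
      · exact stageA t ⟨ht.1, h⟩ hGt
      · rw [h] at hGt; exact hGa hGt
      · have htZ : t ∈ Z3 := ⟨⟨le_of_lt h, le_trans (le_of_lt ht.2) hq3Z.1.2⟩, hGt⟩
        exact absurd (csInf_le hZ3bdd htZ) (not_le.2 ht.2)
    exact no_double_zero hodd hFE2 h2 h2c hlimp (le_refl 0) (by linarith) hG0 hGq3 hnv
  -- linear relation on all of (0, ∞)
  have hconn : ∀ x ∈ Set.Ioi (0:ℝ), ∀ y ∈ Set.Ioi (0:ℝ), Set.Icc x y ⊆ Set.Ioi (0:ℝ) :=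
    fun x hx y hy t ht => lt_of_lt_of_le hx ht.1
  have hk := set_k hodd hFE2 h2 h2c hlimp (subset_refl _) hconn
    (fun t ht => hnz t ht) (Set.mem_Ioi.2 ha)
  set k := (deriv G a - deriv G 0) / G a with hkdef
  have hlin : ∀ x : ℝ, 0 < x → deriv G x = c + k * G x := fun x hx => hk x hx
  by_cases hk0 : k = 0
  · left
    refine ⟨c, fun x => ?_⟩
    have hpos : ∀ y : ℝ, 0 < y → G y = c * y := by
      intro y hy
      have hsol := solve_k0 hG (c := c) (le_of_lt hy)
        (fun t ht => by rw [hlin t ht.1, hk0]; ring)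
      rw [hG0] at hsol; linarith
    rcases lt_trichotomy x 0 with hx | hx | hx
    · have h := hodd (-x); rw [neg_neg] at h
      rw [h, hpos (-x) (by linarith)]; ring
    · rw [hx, hG0]; ring
    · exact hpos x hx
  · right
    refine ⟨-(c/k), -k, fun x => ?_⟩
    have hpos : ∀ y : ℝ, 0 < y → G y = c/k * (Real.exp (k*y) - 1) := by
      intro y hy
      have hsol := solve_k hG (c := c) hk0 (le_of_lt hy) (fun t ht => hlin t ht.1)
      rw [hG0, zero_add, mul_zero, neg_zero, Real.exp_zero, mul_one] at hsol
      have h1 : (G y + c/k) * (Real.exp (-(k*y)) * Real.exp (k*y)) = c/k * Real.exp (k*y) := by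
        rw [← mul_assoc, hsol]
      rw [← Real.exp_add, neg_add_cancel, Real.exp_zero, mul_one] at h1
      have : c/k * (Real.exp (k*y) - 1) = c/k * Real.exp (k*y) - c/k := by ring
      linarith
    rcases lt_trichotomy x 0 with hx | hx | hx
    · have h := hodd (-x); rw [neg_neg] at h
      rw [h, hpos (-x) (by linarith), Real.sign_of_neg hx, abs_of_neg hx,
        show -(-k) * -x = k * (-x) by ring]
      ring
    · rw [hx, hG0]; simp
    · rw [hpos x hx, Real.sign_of_pos hx, abs_of_pos hx,
        show -(-k) * x = k * x by ring]
      ring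
end

section
/- Let G : ℝ → ℝ satisfy the functional equation (FE), and let I ⊆ ℝ be an open interval on which G does not vanish (G(x) ≠ 0 for all x ∈ I). Then there exists a constant c ∈ ℝ such that G(−2x) + 2G(x) = c·G(x)² for all x ∈ I. -/
/-!
Taking `(x, y, z) = (x, x, -2x)` in (FE) gives
`G'(x) (G(x) + G(-2x)) + G'(-2x) G(x) = 0`, which is, up to the factor `-2 G(x) / G(x)^4`,
the numerator of the derivative of `(G(-2x) + 2 G(x)) / G(x)^2`. That quotient therefore has
zero derivative wherever `G ≠ 0`, and is constant on any interval avoiding the zeros of `G`.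
-/

open Real

theorem Convex.is_const_of_hasDerivAt_zero {s : Set ℝ} {f : ℝ → ℝ} (hs : Convex ℝ s)
    (hf : ∀ x ∈ s, HasDerivAt f 0 x) {x y : ℝ} (hx : x ∈ s) (hy : y ∈ s) : f x = f y := by
  have h := hs.norm_image_sub_le_of_norm_hasDerivWithin_le
    (fun z hz => (hf z hz).hasDerivWithinAt) (C := 0) (fun _ _ => by simp) hx hy
  rw [zero_mul, norm_le_zero_iff, sub_eq_zero] at h
  exact h.symm

namespace FE

variable {G : ℝ → ℝ}

theorem diagonal (hFE : FE G) (x : ℝ) :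
    deriv G x * (G x + G (-2 * x)) + deriv G (-2 * x) * G x = 0 := by
  have h := hFE.2 x x (-2 * x) (by ring)
  linear_combination h / 2

theorem hasDerivAt_div_sq_zero (hFE : FE G) {x : ℝ} (hx : G x ≠ 0) :
    HasDerivAt (fun x => (G (-2 * x) + 2 * G x) / G x ^ 2) 0 x := by
  have hG := hFE.1
  have hnum : HasDerivAt (fun x => G (-2 * x) + 2 * G x)
      (deriv G (-2 * x) * (-2) + 2 * deriv G x) x := by
    have hlin : HasDerivAt (fun x : ℝ => -2 * x) (-2) x := by
      simpa using (hasDerivAt_id x).const_mul (-2)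
    exact ((hG (-2 * x)).hasDerivAt.comp x hlin).add ((hG x).hasDerivAt.const_mul 2)
  have hden : HasDerivAt (fun x => G x ^ 2) (2 * G x ^ 1 * deriv G x) x :=
    (hG x).hasDerivAt.pow 2
  refine (hnum.div hden (pow_ne_zero 2 hx)).congr_deriv (div_eq_zero_iff.2 (Or.inl ?_))
  linear_combination (-2 * G x) * hFE.diagonal x

end FE

theorem stmt6_general (G : ℝ → ℝ) (hFE : FE G) (I : Set ℝ)
    (hIconn : I.OrdConnected)
    (hne : ∀ x ∈ I, G x ≠ 0) :
    ∃ c : ℝ, ∀ x ∈ I, G (-2 * x) + 2 * G x = c * (G x) ^ 2 := by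
  rcases I.eq_empty_or_nonempty with hI | ⟨x₀, hx₀⟩
  · exact ⟨0, by simp [hI]⟩
  refine ⟨(G (-2 * x₀) + 2 * G x₀) / G x₀ ^ 2, fun x hx => ?_⟩
  have hconst := hIconn.convex.is_const_of_hasDerivAt_zero
    (fun z hz => hFE.hasDerivAt_div_sq_zero (hne z hz)) hx hx₀
  rw [← hconst]
  field_simp [hne x hx]

theorem stmt6 (G : ℝ → ℝ) (hFE : FE G) (I : Set ℝ)
    (hIopen : IsOpen I) (hIconn : I.OrdConnected)
    (hne : ∀ x ∈ I, G x ≠ 0) :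
    ∃ c : ℝ, ∀ x ∈ I, G (-2 * x) + 2 * G x = c * (G x) ^ 2 :=
  stmt6_general G hFE I hIconn hne
end

section
/- For any real constants a and A, the function G : ℝ → ℝ defined by G(x) = a(e^{Ax} + e^{−Ax} + 1) is differentiable and satisfies the functional equation (FE). -/
/-!
Since `e^{Ax} + e^{-Ax} = 2 cosh (Ax)`, we have `G = a (2 cosh (A x) + 1)` and `G' = 2 a A sinh (A x)`.
With `X + Y + Z = 0`, the addition formula pairs the terms `sinh X cosh Y + cosh X sinh Y` into
`sinh (X + Y) = - sinh Z`, so these mixed terms sum to `-(sinh X + sinh Y + sinh Z)`; the constant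
`1` contributes exactly `+(sinh X + sinh Y + sinh Z)` back, because it is half the coefficient of `cosh`.
-/

open Real

theorem Real.sinh_mul_cosh_add_cosh_cyclic {X Y Z : ℝ} (h : X + Y + Z = 0) :
    sinh X * (cosh Y + cosh Z) + sinh Y * (cosh Z + cosh X) + sinh Z * (cosh X + cosh Y) =
      -(sinh X + sinh Y + sinh Z) := by
  have hXY : sinh (X + Y) = -sinh Z := by rw [show X + Y = -Z by linarith, sinh_neg]
  have hYZ : sinh (Y + Z) = -sinh X := by rw [show Y + Z = -X by linarith, sinh_neg]
  have hZX : sinh (Z + X) = -sinh Y := by rw [show Z + X = -Y by linarith, sinh_neg]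
  rw [sinh_add] at hXY hYZ hZX
  linear_combination hXY + hYZ + hZX

theorem hasDerivAt_two_cosh_add_one (a A x : ℝ) :
    HasDerivAt (fun x => a * (2 * cosh (A * x) + 1)) (2 * a * A * sinh (A * x)) x := by
  have h := ((((hasDerivAt_id' x).const_mul A).cosh).const_mul 2).add_const 1 |>.const_mul a
  exact h.congr_deriv (by ring)

theorem fe_two_cosh_add_one (a A : ℝ) : FE (fun x => a * (2 * cosh (A * x) + 1)) := by
  refine ⟨fun x => (hasDerivAt_two_cosh_add_one a A x).differentiableAt, fun x y z h => ?_⟩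
  simp only [(hasDerivAt_two_cosh_add_one a A _).deriv]
  have key := sinh_mul_cosh_add_cosh_cyclic (X := A * x) (Y := A * y) (Z := A * z)
    (by linear_combination A * h)
  linear_combination 4 * a ^ 2 * A * key

theorem stmt8 (a A : ℝ) :
    FE (fun x : ℝ => a * (Real.exp (A * x) + Real.exp (-A * x) + 1)) := by
  convert fe_two_cosh_add_one a A using 3 with x
  rw [cosh_eq, neg_mul]
  ring
end

section
/- The function G : ℝ → ℝ defined by G(x) = sin(x)·sin(x − π/3) is differentiable and satisfies the functional equation (FE); moreover it satisfies G(−2x) + 2G(x) = 4·G(x)² for all x ∈ ℝ. -/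
open Real

lemma hG_aux (x : ℝ) : HasDerivAt (fun t : ℝ => Real.sin t * Real.sin (t - π/3))
    (Real.sin (2*x - π/3)) x := by
  have h2 : HasDerivAt (fun t : ℝ => Real.sin (t - π/3)) (Real.cos (x - π/3)) x := by
    simpa [Function.comp_def] using (Real.hasDerivAt_sin (x - π/3)).comp x ((hasDerivAt_id x).sub_const (π/3))
  have := (Real.hasDerivAt_sin x).mul h2
  have harg : Real.sin (2*x - π/3)
      = Real.cos x * Real.sin (x - π/3) + Real.sin x * Real.cos (x - π/3) := by
    rw [show 2*x - π/3 = x + (x - π/3) by ring, Real.sin_add]; ring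
  rw [harg]
  exact this

lemma hform_aux (t : ℝ) : Real.sin t * Real.sin (t - π/3) = 1/4 - Real.cos (2*t - π/3)/2 := by
  have hx := Real.sin_sq_add_cos_sq t
  simp only [Real.sin_sub, Real.cos_sub, show (2:ℝ)*t = t + t by ring, Real.sin_add,
    Real.cos_add, Real.sin_pi_div_three, Real.cos_pi_div_three]
  linear_combination hx / 4

lemma key_aux (a b c : ℝ) (h : a + b + c = -π) :
    Real.sin a * ((1/4 - Real.cos b/2) + (1/4 - Real.cos c/2)) +
    Real.sin b * ((1/4 - Real.cos c/2) + (1/4 - Real.cos a/2)) +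
    Real.sin c * ((1/4 - Real.cos a/2) + (1/4 - Real.cos b/2)) = 0 := by
  have hc : c = -π - a - b := by linarith
  subst hc
  simp [Real.sin_sub, Real.cos_sub, Real.sin_add, Real.cos_add, Real.sin_neg, Real.cos_neg,
    Real.sin_pi, Real.cos_pi]
  linear_combination (-Real.sin a/2) * Real.sin_sq_add_cos_sq b
    + (-Real.sin b/2) * Real.sin_sq_add_cos_sq a

theorem stmt9 :
    FE (fun x : ℝ => Real.sin x * Real.sin (x - π / 3)) ∧
    ∀ x : ℝ,
      Real.sin (-2 * x) * Real.sin (-2 * x - π / 3) +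
          2 * (Real.sin x * Real.sin (x - π / 3)) =
        4 * (Real.sin x * Real.sin (x - π / 3)) ^ 2 := by
  constructor
  · constructor
    · exact fun x => (hG_aux x).differentiableAt
    · intro x y z hxyz
      have hd : ∀ t : ℝ, deriv (fun t : ℝ => Real.sin t * Real.sin (t - π/3)) t
          = Real.sin (2*t - π/3) := fun t => (hG_aux t).deriv
      simp only [hd]
      simp only [hform_aux]
      exact key_aux (2*x - π/3) (2*y - π/3) (2*z - π/3) (by linarith)
  · intro x
    have hx := Real.sin_sq_add_cos_sq x
    have hr : Real.sqrt 3 ^ 2 = 3 := Real.sq_sqrt (by norm_num)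
    simp only [Real.sin_sub, Real.cos_sub, Real.sin_neg, Real.cos_neg,
      show (-2:ℝ) * x = -(x + x) from by ring, Real.sin_add, Real.cos_add,
      Real.sin_pi_div_three, Real.cos_pi_div_three]
    linear_combination (Real.sin x * Real.cos x * Real.sqrt 3 - Real.sin x ^ 2) * hx
      - Real.sin x ^ 2 * Real.cos x ^ 2 * hr
end

section
/- The function G : ℝ → ℝ defined by G(x) = sgn(x)(1 − e^{−|x|}) is differentiable at every point of ℝ, with derivative G'(x) = e^{−|x|}, and it satisfies the functional equation (FE). -/
open Real

/-! On each half-line `G` is an affine function of `exp`, and with `a = e^{-x}`, `b = e^{-y}`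
for `x, y ≥ 0` the (FE) sum at `(x, y, -(x + y))` becomes the polynomial identity
`a (ab - b) + b (ab - a) + ab (2 - a - b) = 0`. The (FE) sum is symmetric in `x, y, z`
and odd under `(x, y, z) ↦ (-x, -y, -z)`, and among three reals with sum `0` two have
the same sign, so this case is the general one. -/

theorem hasDerivAt_of_hasDerivWithinAt_Iic_Ici {E : Type*} [NormedAddCommGroup E]
    [NormedSpace ℝ E] {f : ℝ → E} {f' : E} {a : ℝ}
    (hl : HasDerivWithinAt f f' (Set.Iic a) a) (hr : HasDerivWithinAt f f' (Set.Ici a) a) :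
    HasDerivAt f f' a := by
  simpa only [Set.Iic_union_Ici, hasDerivWithinAt_univ] using hl.union hr

namespace SignedExp

noncomputable def G (x : ℝ) : ℝ := Real.sign x * (1 - Real.exp (-|x|))

theorem G_of_nonneg {x : ℝ} (hx : 0 ≤ x) : G x = 1 - exp (-x) := by
  rcases hx.eq_or_lt with rfl | hx
  · simp [G]
  · simp [G, Real.sign_of_pos hx, abs_of_pos hx]

theorem G_of_nonpos {x : ℝ} (hx : x ≤ 0) : G x = exp x - 1 := by
  rcases hx.eq_or_lt with rfl | hx
  · simp [G]
  · simp [G, Real.sign_of_neg hx, abs_of_neg hx]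

theorem G_neg (x : ℝ) : G (-x) = -G x := by
  simp only [G, Real.sign_neg, abs_neg, neg_mul]

theorem hasDerivWithinAt_G_Iic {x : ℝ} (hx : x ≤ 0) :
    HasDerivWithinAt G (exp (-|x|)) (Set.Iic 0) x := by
  rw [abs_of_nonpos hx, neg_neg]
  exact ((hasDerivAt_exp x).sub_const 1).hasDerivWithinAt.congr
    (fun _ ht => G_of_nonpos ht) (G_of_nonpos hx)

theorem hasDerivWithinAt_G_Ici {x : ℝ} (hx : 0 ≤ x) :
    HasDerivWithinAt G (exp (-|x|)) (Set.Ici 0) x := by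
  rw [abs_of_nonneg hx]
  exact ((((hasDerivAt_exp (-x)).comp x (hasDerivAt_neg x)).const_sub 1).hasDerivWithinAt.congr
    (fun _ ht => G_of_nonneg ht) (G_of_nonneg hx)).congr_deriv (by simp)

theorem hasDerivAt_G (x : ℝ) : HasDerivAt G (exp (-|x|)) x := by
  rcases lt_trichotomy x 0 with hx | rfl | hx
  · exact (hasDerivWithinAt_G_Iic hx.le).hasDerivAt (Iic_mem_nhds hx)
  · exact hasDerivAt_of_hasDerivWithinAt_Iic_Ici (hasDerivWithinAt_G_Iic le_rfl)
      (hasDerivWithinAt_G_Ici le_rfl)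
  · exact (hasDerivWithinAt_G_Ici hx.le).hasDerivAt (Ici_mem_nhds hx)

noncomputable def feSum (x y z : ℝ) : ℝ :=
  exp (-|x|) * (G y + G z) + exp (-|y|) * (G z + G x) + exp (-|z|) * (G x + G y)

theorem feSum_rotate (x y z : ℝ) : feSum x y z = feSum y z x := by
  unfold feSum; ring

theorem feSum_neg (x y z : ℝ) : feSum (-x) (-y) (-z) = -feSum x y z := by
  simp only [feSum, G_neg, abs_neg]; ring

theorem feSum_eq_zero_of_nonneg {x y z : ℝ} (hx : 0 ≤ x) (hy : 0 ≤ y) (h : x + y + z = 0) :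
    feSum x y z = 0 := by
  have hz : z ≤ 0 := by linarith
  have hexp : exp z = exp (-x) * exp (-y) := by rw [← exp_add]; congr 1; linarith
  rw [feSum, abs_of_nonneg hx, abs_of_nonneg hy, abs_of_nonpos hz, neg_neg,
    G_of_nonneg hx, G_of_nonneg hy, G_of_nonpos hz, hexp]
  ring

theorem feSum_eq_zero_of_nonpos {x y z : ℝ} (hx : x ≤ 0) (hy : y ≤ 0) (h : x + y + z = 0) :
    feSum x y z = 0 := by
  have := feSum_eq_zero_of_nonneg (neg_nonneg.2 hx) (neg_nonneg.2 hy)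
    (by linarith : -x + -y + -z = 0)
  rwa [feSum_neg, neg_eq_zero] at this

theorem feSum_eq_zero {x y z : ℝ} (h : x + y + z = 0) : feSum x y z = 0 := by
  have h' : y + z + x = 0 := by linarith
  have h'' : z + x + y = 0 := by linarith
  rcases le_total 0 x with hx | hx <;> rcases le_total 0 y with hy | hy
  · exact feSum_eq_zero_of_nonneg hx hy h
  · rcases le_total 0 z with hz | hz
    · rw [feSum_rotate, feSum_rotate]; exact feSum_eq_zero_of_nonneg hz hx h''
    · rw [feSum_rotate]; exact feSum_eq_zero_of_nonpos hy hz h'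
  · rcases le_total 0 z with hz | hz
    · rw [feSum_rotate]; exact feSum_eq_zero_of_nonneg hy hz h'
    · rw [feSum_rotate, feSum_rotate]; exact feSum_eq_zero_of_nonpos hz hx h''
  · exact feSum_eq_zero_of_nonpos hx hy h

end SignedExp

open SignedExp in
theorem stmt10 :
    (∀ x : ℝ, HasDerivAt (fun x : ℝ => Real.sign x * (1 - Real.exp (-|x|)))
      (Real.exp (-|x|)) x) ∧
    FE (fun x : ℝ => Real.sign x * (1 - Real.exp (-|x|))) := by
  show (∀ x, HasDerivAt G (exp (-|x|)) x) ∧ FE G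
  refine ⟨hasDerivAt_G, fun x => (hasDerivAt_G x).differentiableAt, fun x y z h => ?_⟩
  rw [(hasDerivAt_G x).deriv, (hasDerivAt_G y).deriv, (hasDerivAt_G z).deriv]
  exact feSum_eq_zero h
end

section
/- The function G : ℝ → ℝ defined by G(x) = sgn(x)(1 − e^{−|x|}) satisfies G(−2x) + 2G(x) = G(x)² for all x > 0 and G(−2x) + 2G(x) = −G(x)² for all x < 0; in particular the constant c in the relation G(−2x) + 2G(x) = c·G(x)² takes different values (c = 1 and c = −1) on the two half-lines. -/
open Real

/-!
For `G = sgnOneSubExp`, `x > 0` and `t = e^{-x}` we have `G x = 1 - t` and `G (-2x) = -(1 - t²)`, so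
`G (-2x) + 2 G x = (1 - t)² = (G x)²`. Since `G` is odd, substituting `-x` flips the sign
of the left-hand side but not of `(G x)²`, which gives the relation with `c = -1` for `x < 0`.
-/

noncomputable def sgnOneSubExp (x : ℝ) : ℝ :=
  Real.sign x * (1 - Real.exp (-|x|))

lemma sgnOneSubExp_neg (x : ℝ) : sgnOneSubExp (-x) = -sgnOneSubExp x := by
  simp only [sgnOneSubExp, Real.sign_neg, abs_neg, neg_mul]

lemma sgnOneSubExp_of_pos {x : ℝ} (hx : 0 < x) : sgnOneSubExp x = 1 - Real.exp (-x) := by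
  rw [sgnOneSubExp, Real.sign_of_pos hx, abs_of_pos hx, one_mul]

lemma sgnOneSubExp_neg_two_mul_add_two_mul {x : ℝ} (hx : 0 < x) :
    sgnOneSubExp (-2 * x) + 2 * sgnOneSubExp x = sgnOneSubExp x ^ 2 := by
  have h2x : Real.exp (-(2 * x)) = Real.exp (-x) ^ 2 := by
    rw [← Real.exp_nat_mul]; ring_nf
  rw [neg_mul, sgnOneSubExp_neg, sgnOneSubExp_of_pos (by positivity), sgnOneSubExp_of_pos hx,
    h2x]
  ring

theorem stmt11 :
    (∀ x : ℝ, 0 < x →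
      Real.sign (-2 * x) * (1 - Real.exp (-|(-2 * x)|)) +
          2 * (Real.sign x * (1 - Real.exp (-|x|))) =
        (Real.sign x * (1 - Real.exp (-|x|))) ^ 2) ∧
    (∀ x : ℝ, x < 0 →
      Real.sign (-2 * x) * (1 - Real.exp (-|(-2 * x)|)) +
          2 * (Real.sign x * (1 - Real.exp (-|x|))) =
        -(Real.sign x * (1 - Real.exp (-|x|))) ^ 2) := by
  refine ⟨fun x hx => sgnOneSubExp_neg_two_mul_add_two_mul hx, fun x hx => ?_⟩
  have hpos := sgnOneSubExp_neg_two_mul_add_two_mul (neg_pos.mpr hx)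
  rw [mul_neg, sgnOneSubExp_neg, sgnOneSubExp_neg, neg_sq] at hpos
  change sgnOneSubExp (-2 * x) + 2 * sgnOneSubExp x = -sgnOneSubExp x ^ 2
  linarith
end

section
/- Let G : ℝ → ℝ be twice continuously differentiable and satisfy the functional equation (FE). Then for all real α, β, γ with α + β + γ = 0, G'(β)(G'(α) − G'(γ)) − G''(γ)(G(α) + G(β)) + G''(α)(G(β) + G(γ)) = 0. -/
open Real

theorem stmt12 (G : ℝ → ℝ) (hC2 : ContDiff ℝ 2 G) (hFE : FE G) :
    ∀ α β γ : ℝ, α + β + γ = 0 →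
      deriv G β * (deriv G α - deriv G γ) -
          deriv (deriv G) γ * (G α + G β) +
          deriv (deriv G) α * (G β + G γ) = 0 := by
  obtain ⟨hG, hfe⟩ := hFE
  have hg : Differentiable ℝ (deriv G) := by
    have h2 : ContDiff ℝ ((1 : ℕ∞) + 1) G := by
      convert hC2 using 2
      norm_num
    exact (contDiff_succ_iff_deriv.mp h2).2.2.differentiable (by norm_num)
  intro α β γ hsum
  have hγ : γ = -α - β := by linarith
  subst hγ
  have key : (fun x : ℝ => deriv G x * (G β + G (-x - β)) + deriv G β * (G (-x - β) + G x)
      + deriv G (-x - β) * (G x + G β)) = fun _ => (0 : ℝ) := by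
    funext x
    exact hfe x β (-x - β) (by ring)
  have hx : HasDerivAt (fun x : ℝ => -x - β) (-1) α := by
    simpa using ((hasDerivAt_id α).neg.sub_const β)
  have hGc : HasDerivAt (fun x : ℝ => G (-x - β)) (deriv G (-α - β) * (-1)) α :=
    (hG (-α - β)).hasDerivAt.comp α hx
  have hgc : HasDerivAt (fun x : ℝ => deriv G (-x - β)) (deriv (deriv G) (-α - β) * (-1)) α :=
    by have := (hg (-α - β)).hasDerivAt.comp α hx; exact this
  have hD : HasDerivAt (fun x : ℝ => deriv G x * (G β + G (-x - β)) + deriv G β * (G (-x - β) + G x)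
      + deriv G (-x - β) * (G x + G β))
      ((deriv (deriv G) α * (G β + G (-α - β)) + deriv G α * (0 + deriv G (-α - β) * (-1)))
       + (0 * (G (-α - β) + G α) + deriv G β * (deriv G (-α - β) * (-1) + deriv G α))
       + (deriv (deriv G) (-α - β) * (-1) * (G α + G β) + deriv G (-α - β) * (deriv G α + 0))) α := by
    exact (((hg α).hasDerivAt.mul ((hasDerivAt_const α (G β)).add hGc)).add
      ((hasDerivAt_const α (deriv G β)).mul (hGc.add (hG α).hasDerivAt))).add
      (hgc.mul ((hG α).hasDerivAt.add (hasDerivAt_const α (G β))))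
  rw [key] at hD
  have h0 : (deriv (deriv G) α * (G β + G (-α - β)) + deriv G α * (0 + deriv G (-α - β) * (-1)))
       + (0 * (G (-α - β) + G α) + deriv G β * (deriv G (-α - β) * (-1) + deriv G α))
       + (deriv (deriv G) (-α - β) * (-1) * (G α + G β) + deriv G (-α - β) * (deriv G α + 0)) = 0 :=
    hD.unique (hasDerivAt_const α 0)
  nlinarith [h0]
end

section
/- Let G : ℝ → ℝ be three times continuously differentiable and satisfy the functional equation (FE). Then for all real α, β, γ with α + β + γ = 0, G'''(β)(G(α) + G(γ)) + G''(γ)(G'(α) − G'(β)) − G''(α)(G'(β) − G'(γ)) = 0. -/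
open Real

private lemma hda {f : ℝ → ℝ} (hf : Differentiable ℝ f) (a t : ℝ) :
    HasDerivAt (fun s => f (a - s)) (-(deriv f (a - t))) t := by
  have h1 : HasDerivAt (fun s : ℝ => a - s) (-1) t := by
    exact (hasDerivAt_id t).const_sub a
  simpa [Function.comp_def] using ((hf (a - t)).hasDerivAt.comp t h1)

private lemma hdb {f : ℝ → ℝ} (hf : Differentiable ℝ f) (b t : ℝ) :
    HasDerivAt (fun s => f (b + s)) (deriv f (b + t)) t := by
  have h1 : HasDerivAt (fun s : ℝ => b + s) 1 t := by
    exact (hasDerivAt_id t).const_add b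
  simpa [Function.comp_def] using ((hf (b + t)).hasDerivAt.comp t h1)

private lemma zero_of_const {E : ℝ → ℝ} {D : ℝ} (h0 : E = fun _ => 0)
    (hD : HasDerivAt E D 0) : D = 0 := by
  have : HasDerivAt E 0 0 := by rw [h0]; exact hasDerivAt_const 0 0
  exact hD.unique this

theorem stmt13 (G : ℝ → ℝ) (hC3 : ContDiff ℝ 3 G) (hFE : FE G) :
    ∀ α β γ : ℝ, α + β + γ = 0 →
      deriv (deriv (deriv G)) β * (G α + G γ) +
          deriv (deriv G) γ * (deriv G α - deriv G β) -
          deriv (deriv G) α * (deriv G β - deriv G γ) = 0 := by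
  set g1 := deriv G with hg1def
  set g2 := deriv g1 with hg2def
  set g3 := deriv g2 with hg3def
  have hG : Differentiable ℝ G := hFE.1
  have hC2 : ContDiff ℝ 2 g1 := by
    have := (contDiff_succ_iff_deriv (n := 2)).mp (by norm_num at hC3 ⊢; exact hC3)
    exact this.2.2
  have hg1 : Differentiable ℝ g1 := hC2.differentiable (by norm_num)
  have hC1 : ContDiff ℝ 1 g2 := by
    have := (contDiff_succ_iff_deriv (n := 1)).mp (by norm_num at hC2 ⊢; exact hC2)
    exact this.2.2
  have hg2 : Differentiable ℝ g2 := hC1.differentiable (by norm_num)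
  -- Step 1: the differentiated identity R
  have R : ∀ a b c : ℝ, a + b + c = 0 →
      -(g2 a) * (G b + G c) + g2 b * (G c + G a) + g1 c * (g1 b - g1 a) = 0 := by
    intro a b c habc
    have hE : (fun t => g1 (a - t) * (G (b + t) + G c) + g1 (b + t) * (G c + G (a - t))
        + g1 c * (G (a - t) + G (b + t))) = fun _ => 0 :=
      funext fun t => hFE.2 (a - t) (b + t) c (by linarith)
    have hD : HasDerivAt (fun t => g1 (a - t) * (G (b + t) + G c)
        + g1 (b + t) * (G c + G (a - t)) + g1 c * (G (a - t) + G (b + t)))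
        ((-(g2 (a - 0))) * (G (b + 0) + G c) + g1 (a - 0) * (deriv G (b + 0))
          + ((g2 (b + 0)) * (G c + G (a - 0)) + g1 (b + 0) * (0 + -(deriv G (a - 0))))
          + g1 c * (-(deriv G (a - 0)) + deriv G (b + 0))) 0 := by
      exact (((hda hg1 a 0).mul ((hdb hG b 0).add_const (G c))).add
        ((hdb hg1 b 0).mul ((hasDerivAt_const 0 (G c)).add (hda hG a 0)))).add
        (((hda hG a 0).add (hdb hG b 0)).const_mul (g1 c))
    have h0 := zero_of_const hE hD
    simp only [sub_zero, add_zero, ← hg1def] at h0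
    linear_combination h0
  -- Step 2: differentiate R
  intro α β γ habc
  have hF : (fun t => -(g2 α) * (G (β + t) + G (γ - t)) + g2 (β + t) * (G (γ - t) + G α)
      + g1 (γ - t) * (g1 (β + t) - g1 α)) = fun _ => 0 :=
    funext fun t => R α (β + t) (γ - t) (by linarith)
  have hD : HasDerivAt (fun t => -(g2 α) * (G (β + t) + G (γ - t))
      + g2 (β + t) * (G (γ - t) + G α) + g1 (γ - t) * (g1 (β + t) - g1 α))
      (-g2 α * (deriv G (β + 0) + -deriv G (γ - 0)) +
        (deriv g2 (β + 0) * (G (γ - 0) + G α) + g2 (β + 0) * -deriv G (γ - 0)) +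
      (-deriv g1 (γ - 0) * (g1 (β + 0) - g1 α) + g1 (γ - 0) * deriv g1 (β + 0))) 0 := by
    exact ((((hdb hG β 0).add (hda hG γ 0)).const_mul (-(g2 α))).add
      ((hdb hg2 β 0).mul ((hda hG γ 0).add_const (G α)))).add
      ((hda hg1 γ 0).mul ((hdb hg1 β 0).sub_const (g1 α)))
  have h0 := zero_of_const hF hD
  simp only [sub_zero, add_zero, ← hg1def, ← hg2def, ← hg3def] at h0
  linear_combination h0
end

section
/- Let G : ℝ → ℝ be three times continuously differentiable and satisfy the functional equation (FE). Then for all real α, β, γ with α + β + γ = 0, G'''(α)(G'(β) − G'(γ)) + G'''(β)(G'(γ) − G'(α)) + G'''(γ)(G'(α) − G'(β)) = 0. -/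
open Real

section Aux

variable (G g1 g2 g3 : ℝ → ℝ)

/-- First derivative of the FE identity in the direction `e₁ - e₃`. -/
lemma FE_aux1 (hG1 : ∀ x, HasDerivAt G (g1 x) x) (hG2 : ∀ x, HasDerivAt g1 (g2 x) x)
    (h0 : ∀ x y z : ℝ, x + y + z = 0 →
      g1 x * (G y + G z) + g1 y * (G z + G x) + g1 z * (G x + G y) = 0) :
    ∀ x y z : ℝ, x + y + z = 0 →
      -(G x * g2 z) + g1 x * g1 y + g2 x * (G y + G z) - G y * g2 z - g1 y * g1 z = 0 := by
  intro x y z hsum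
  have hz : z = -x - y := by linarith
  subst hz
  have hd : HasDerivAt (fun x : ℝ => -x - y) (-1 : ℝ) x := ((hasDerivAt_id x).neg).sub_const y
  have hGz : HasDerivAt (fun x : ℝ => G (-x - y)) (g1 (-x - y) * (-1)) x :=
    (hG1 (-x - y)).comp x hd
  have hg1z : HasDerivAt (fun x : ℝ => g1 (-x - y)) (g2 (-x - y) * (-1)) x :=
    (hG2 (-x - y)).comp x hd
  have hF := (((hG2 x).mul ((hasDerivAt_const x (G y)).add hGz)).add
      ((hasDerivAt_const x (g1 y)).mul (hGz.add (hG1 x)))).add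
      (hg1z.mul ((hG1 x).add (hasDerivAt_const x (G y))))
  have hF0 : HasDerivAt
      (fun x : ℝ => g1 x * (G y + G (-x - y)) + g1 y * (G (-x - y) + G x)
        + g1 (-x - y) * (G x + G y)) (0 : ℝ) x := by
    have hfun : (fun x : ℝ => g1 x * (G y + G (-x - y)) + g1 y * (G (-x - y) + G x)
        + g1 (-x - y) * (G x + G y)) = fun _ => (0 : ℝ) :=
      funext fun t => h0 t y (-t - y) (by ring)
    rw [hfun]
    exact hasDerivAt_const x 0
  have he := hF.unique hF0
  simp only [Pi.add_apply] at he
  linear_combination he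

/-- Second mixed derivative of the FE identity (directions `e₁ - e₃`, then `e₂ - e₃`). -/
lemma FE_aux2 (hG1 : ∀ x, HasDerivAt G (g1 x) x) (hG2 : ∀ x, HasDerivAt g1 (g2 x) x)
    (hG3 : ∀ x, HasDerivAt g2 (g3 x) x)
    (h1 : ∀ x y z : ℝ, x + y + z = 0 →
      -(G x * g2 z) + g1 x * g1 y + g2 x * (G y + G z) - G y * g2 z - g1 y * g1 z = 0) :
    ∀ x y z : ℝ, x + y + z = 0 →
      G x * g3 z + g1 x * g2 y + g2 x * g1 y - g2 x * g1 z + G y * g3 z - g2 y * g1 z = 0 := by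
  intro x y z hsum
  have hz : z = -x - y := by linarith
  subst hz
  have hd : HasDerivAt (fun y : ℝ => -x - y) (-1 : ℝ) y := (hasDerivAt_id y).const_sub (-x)
  have hGz : HasDerivAt (fun y : ℝ => G (-x - y)) (g1 (-x - y) * (-1)) y :=
    (hG1 (-x - y)).comp y hd
  have hg1z : HasDerivAt (fun y : ℝ => g1 (-x - y)) (g2 (-x - y) * (-1)) y :=
    (hG2 (-x - y)).comp y hd
  have hg2z : HasDerivAt (fun y : ℝ => g2 (-x - y)) (g3 (-x - y) * (-1)) y :=
    (hG3 (-x - y)).comp y hd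
  have hF := ((((((hasDerivAt_const y (G x)).mul hg2z).neg).add
      ((hasDerivAt_const y (g1 x)).mul (hG2 y))).add
      ((hasDerivAt_const y (g2 x)).mul ((hG1 y).add hGz))).sub
      ((hG1 y).mul hg2z)).sub ((hG2 y).mul hg1z)
  have hF0 : HasDerivAt
      (fun y : ℝ => -(G x * g2 (-x - y)) + g1 x * g1 y + g2 x * (G y + G (-x - y))
        - G y * g2 (-x - y) - g1 y * g1 (-x - y)) (0 : ℝ) y := by
    have hfun : (fun y : ℝ => -(G x * g2 (-x - y)) + g1 x * g1 y
        + g2 x * (G y + G (-x - y)) - G y * g2 (-x - y) - g1 y * g1 (-x - y))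
        = fun _ => (0 : ℝ) := by
      funext t
      have := h1 x t (-x - t) (by ring)
      linarith
    rw [hfun]
    exact hasDerivAt_const y 0
  have he := hF.unique hF0
  linear_combination he

/-- Third mixed derivative, in the direction `e₁ - e₂`, yields the goal identity. -/
lemma FE_aux3 (hG1 : ∀ x, HasDerivAt G (g1 x) x) (hG2 : ∀ x, HasDerivAt g1 (g2 x) x)
    (hG3 : ∀ x, HasDerivAt g2 (g3 x) x)
    (h2 : ∀ x y z : ℝ, x + y + z = 0 →
      G x * g3 z + g1 x * g2 y + g2 x * g1 y - g2 x * g1 z + G y * g3 z - g2 y * g1 z = 0) :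
    ∀ x y z : ℝ, x + y + z = 0 →
      g3 x * (g1 y - g1 z) + g3 y * (g1 z - g1 x) + g3 z * (g1 x - g1 y) = 0 := by
  intro x y z hsum
  have hdx : HasDerivAt (fun t : ℝ => x + t) (1 : ℝ) (0 : ℝ) := (hasDerivAt_id 0).const_add x
  have hdy : HasDerivAt (fun t : ℝ => y - t) (-1 : ℝ) (0 : ℝ) := (hasDerivAt_id 0).const_sub y
  have hGx : HasDerivAt (fun t : ℝ => G (x + t)) (g1 (x + 0) * 1) (0 : ℝ) :=
    (hG1 (x + 0)).comp 0 hdx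
  have hg1x : HasDerivAt (fun t : ℝ => g1 (x + t)) (g2 (x + 0) * 1) (0 : ℝ) :=
    (hG2 (x + 0)).comp 0 hdx
  have hg2x : HasDerivAt (fun t : ℝ => g2 (x + t)) (g3 (x + 0) * 1) (0 : ℝ) :=
    (hG3 (x + 0)).comp 0 hdx
  have hGy : HasDerivAt (fun t : ℝ => G (y - t)) (g1 (y - 0) * (-1)) (0 : ℝ) :=
    (hG1 (y - 0)).comp 0 hdy
  have hg1y : HasDerivAt (fun t : ℝ => g1 (y - t)) (g2 (y - 0) * (-1)) (0 : ℝ) :=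
    (hG2 (y - 0)).comp 0 hdy
  have hg2y : HasDerivAt (fun t : ℝ => g2 (y - t)) (g3 (y - 0) * (-1)) (0 : ℝ) :=
    (hG3 (y - 0)).comp 0 hdy
  have hF := ((((hGx.mul (hasDerivAt_const (0 : ℝ) (g3 z))).add
      (hg1x.mul hg2y)).add (hg2x.mul hg1y)).sub
      (hg2x.mul (hasDerivAt_const (0 : ℝ) (g1 z)))).add
      ((hGy.mul (hasDerivAt_const (0 : ℝ) (g3 z))).sub
      (hg2y.mul (hasDerivAt_const (0 : ℝ) (g1 z))))
  have hF0 : HasDerivAt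
      (fun t : ℝ => (((G (x + t) * g3 z + g1 (x + t) * g2 (y - t))
        + g2 (x + t) * g1 (y - t)) - g2 (x + t) * g1 z)
        + (G (y - t) * g3 z - g2 (y - t) * g1 z)) (0 : ℝ) (0 : ℝ) := by
    have hfun : (fun t : ℝ => (((G (x + t) * g3 z + g1 (x + t) * g2 (y - t))
        + g2 (x + t) * g1 (y - t)) - g2 (x + t) * g1 z)
        + (G (y - t) * g3 z - g2 (y - t) * g1 z)) = fun _ => (0 : ℝ) := by
      funext t
      have := h2 (x + t) (y - t) z (by linarith)
      linarith
    rw [hfun]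
    exact hasDerivAt_const 0 0
  have he := hF.unique hF0
  simp only [add_zero, sub_zero] at he
  linear_combination he

end Aux

theorem stmt14 (G : ℝ → ℝ) (hC3 : ContDiff ℝ 3 G) (hFE : FE G) :
    ∀ α β γ : ℝ, α + β + γ = 0 →
      deriv (deriv (deriv G)) α * (deriv G β - deriv G γ) +
          deriv (deriv (deriv G)) β * (deriv G γ - deriv G α) +
          deriv (deriv (deriv G)) γ * (deriv G α - deriv G β) = 0 := by
  have hC3' : ContDiff ℝ ((2 : ℕ) + 1) G := by exact_mod_cast hC3
  have hC2 : ContDiff ℝ ((2:ℕ) : ℕ∞) (deriv G) := ((contDiff_succ_iff_deriv).mp hC3').2.2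
  have hC2' : ContDiff ℝ ((1 : ℕ) + 1) (deriv G) := by exact_mod_cast hC2
  have hC1 : ContDiff ℝ ((1:ℕ) : ℕ∞) (deriv (deriv G)) := ((contDiff_succ_iff_deriv).mp hC2').2.2
  have hG1 : ∀ x, HasDerivAt G (deriv G x) x := fun x => (hFE.1 x).hasDerivAt
  have hG2 : ∀ x, HasDerivAt (deriv G) (deriv (deriv G) x) x := fun x =>
    ((hC2.differentiable (by norm_num)) x).hasDerivAt
  have hG3 : ∀ x, HasDerivAt (deriv (deriv G)) (deriv (deriv (deriv G)) x) x := fun x =>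
    ((hC1.differentiable (by norm_num)) x).hasDerivAt
  have h0 := hFE.2
  have h1 := FE_aux1 G (deriv G) (deriv (deriv G)) hG1 hG2 h0
  have h2 := FE_aux2 G (deriv G) (deriv (deriv G)) (deriv (deriv (deriv G))) hG1 hG2 hG3 h1
  have h3 := FE_aux3 G (deriv G) (deriv (deriv G)) (deriv (deriv (deriv G))) hG1 hG2 hG3 h2
  intro α β γ hsum
  linear_combination h3 α β γ hsum
end

section
/- Let G : ℝ → ℝ be an odd function that is twice continuously differentiable on ℝ and satisfies the functional equation (FE). Then for every β ∈ ℝ one has G''(β)·G(β) − G'(β)² + G'(0)·G'(β) = 0. -/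
open Real

theorem stmt15 (G : ℝ → ℝ) (hodd : ∀ x : ℝ, G (-x) = -G x)
    (hC2 : ContDiff ℝ 2 G) (hFE : FE G) :
    ∀ β : ℝ, deriv (deriv G) β * G β - (deriv G β) ^ 2 + deriv G 0 * deriv G β = 0 := by
  intro β
  have hG : Differentiable ℝ G := hFE.1
  have hC2' : ContDiff ℝ (1 + 1) G := by norm_num at hC2 ⊢; exact hC2
  have hg : Differentiable ℝ (deriv G) :=
    ((contDiff_succ_iff_deriv.mp hC2').2.2).differentiable one_ne_zero
  -- derivative is even
  have heven : ∀ x : ℝ, deriv G (-x) = deriv G x := by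
    intro x
    have h1 : deriv (fun t => G (-t)) x = -deriv G (-x) := deriv_comp_neg _ _
    have h2 : (fun t => G (-t)) = fun t => -G t := funext hodd
    rw [h2] at h1
    have h3 : deriv (fun t => -G t) x = -deriv G x := deriv.neg
    rw [h3] at h1
    linarith
  -- second derivative is odd
  have hodd2 : ∀ x : ℝ, deriv (deriv G) (-x) = -deriv (deriv G) x := by
    intro x
    have h1 : deriv (fun t => deriv G (-t)) x = -deriv (deriv G) (-x) := deriv_comp_neg _ _
    have h2 : (fun t => deriv G (-t)) = deriv G := funext heven
    rw [h2] at h1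
    linarith
  have hG0 : G 0 = 0 := by have := hodd 0; simp at this; linarith
  have hg'0 : deriv (deriv G) 0 = 0 := by have := hodd2 0; simp at this; linarith
  -- the functional equation specialized
  set F : ℝ → ℝ := fun t =>
    deriv G β * (G t + G (-β - t)) + deriv G t * (G (-β - t) + G β) +
      deriv G (-β - t) * (G β + G t) with hF
  have hF0 : ∀ t, F t = 0 := by
    intro t
    exact hFE.2 β t (-β - t) (by ring)
  -- F has derivative E at 0
  have hlin : HasDerivAt (fun t : ℝ => -β - t) (-1) (0 : ℝ) := by
    simpa only [id] using (hasDerivAt_id (0:ℝ)).const_sub (-β)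
  have hGt : HasDerivAt G (deriv G 0) 0 := (hG 0).hasDerivAt
  have hGc : HasDerivAt (fun t : ℝ => G (-β - t)) (deriv G (-β - 0) * (-1)) 0 :=
    (hG (-β - 0)).hasDerivAt.comp 0 hlin
  have hgt : HasDerivAt (deriv G) (deriv (deriv G) 0) 0 := (hg 0).hasDerivAt
  have hgc : HasDerivAt (fun t : ℝ => deriv G (-β - t)) (deriv (deriv G) (-β - 0) * (-1)) 0 :=
    (hg (-β - 0)).hasDerivAt.comp 0 hlin
  have hFderiv : HasDerivAt F
      (deriv G β * (deriv G 0 + deriv G (-β - 0) * (-1)) +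
        (deriv (deriv G) 0 * (G (-β - 0) + G β) + deriv G 0 * (deriv G (-β - 0) * (-1))) +
        (deriv (deriv G) (-β - 0) * (-1) * (G β + G 0) + deriv G (-β - 0) * deriv G 0)) 0 := by
    exact (((hGt.add hGc).const_mul (deriv G β)).add
      (hgt.mul (hGc.add_const (G β)))).add (hgc.mul (hGt.const_add (G β)))
  have hFzero : HasDerivAt F 0 0 := by
    have : F = fun _ => 0 := funext hF0
    rw [this]; exact hasDerivAt_const 0 0
  have hkey := hFderiv.unique hFzero
  simp only [sub_zero, show -β - 0 = -β by ring] at hkey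
  rw [heven β, hodd2 β, hodd β, hG0, hg'0] at hkey
  nlinarith [hkey]
end

section
/- Let G : ℝ → ℝ be real-analytic on all of ℝ, satisfy the functional equation (FE), and suppose G(0) = 0 and G'(0) = 0. Then G is identically zero. -/
open Real Filter

theorem stmt19 (G : ℝ → ℝ) (han : ∀ x : ℝ, AnalyticAt ℝ G x) (hFE : FE G)
    (h0 : G 0 = 0) (h0' : deriv G 0 = 0) :
    ∀ x : ℝ, G x = 0 := by
  have hG : AnalyticAt ℝ G 0 := han 0
  have key : ∀ᶠ z in nhds (0:ℝ), G z = 0 := by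
    by_contra hne
    have hfin : analyticOrderAt G 0 ≠ ⊤ := by
      intro h
      exact hne (analyticOrderAt_eq_top.mp h)
    obtain ⟨n, hn⟩ := WithTop.ne_top_iff_exists.mp hfin
    obtain ⟨g, hg, hg0, heq⟩ := (hG.analyticOrderAt_eq_natCast (n := n)).mp hn.symm
    simp only [sub_zero, smul_eq_mul] at heq
    match n with
    | 0 =>
      have := heq.self_of_nhds
      simp [h0] at this
      exact hg0 this.symm
    | 1 =>
      have hd : deriv G 0 = g 0 := by
        have h1 : deriv G =ᶠ[nhds 0] deriv (fun z : ℝ => z ^ 1 * g z) :=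
          Filter.EventuallyEq.deriv heq
        have h2 : HasDerivAt (fun z : ℝ => z ^ 1 * g z)
            (1 * g 0 + 0 ^ 1 * deriv g 0) 0 := by
          exact ((hasDerivAt_pow 1 (0:ℝ)).mul hg.differentiableAt.hasDerivAt).congr_deriv (by simp)
        rw [h1.self_of_nhds, h2.deriv]
        simp
      rw [h0'] at hd
      exact hg0 hd.symm
    | (m + 2) =>
      set n := m + 2 with hnm
      -- derivative of G near 0
      have hder : ∀ᶠ z in nhds (0:ℝ),
          deriv G z = (n : ℝ) * z ^ (m + 1) * g z + z ^ n * deriv g z := by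
        filter_upwards [Filter.EventuallyEq.deriv heq, hg.eventually_analyticAt]
          with z h1 h2
        have h3 : HasDerivAt (fun z : ℝ => z ^ n * g z)
            ((n : ℝ) * z ^ (n - 1) * g z + z ^ n * deriv g z) z :=
          (hasDerivAt_pow n z).mul h2.differentiableAt.hasDerivAt
        rw [h1, h3.deriv]
        norm_num [hnm]
      have hcont2 : Tendsto (fun z : ℝ => -2 * z) (nhds 0) (nhds (0:ℝ)) := by
        have : Continuous (fun z : ℝ => -2 * z) := by continuity
        simpa using this.tendsto 0
      set φ : ℝ → ℝ := fun x =>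
        ((n : ℝ) * g x + x * deriv g x) * (g x + (-2) ^ n * g (-2 * x)) +
          ((n : ℝ) * (-2) ^ (m + 1) * g (-2 * x) + (-2) ^ n * x * deriv g (-2 * x)) * g x
        with hφ
      -- φ vanishes on a punctured neighborhood
      have hφ0 : ∀ᶠ x in nhdsWithin (0:ℝ) {0}ᶜ, φ x = 0 := by
        have hE : ∀ᶠ x in nhds (0:ℝ), x ^ (2 * m + 3) * (2 * φ x) = 0 := by
          filter_upwards [heq, hder, hcont2.eventually heq, hcont2.eventually hder]
            with x e1 e2 e3 e4
          have hfe := hFE.2 x x (-2 * x) (by ring)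
          rw [e1, e2, e3, e4] at hfe
          rw [hφ]
          simp only [mul_pow] at hfe
          push_cast [hnm] at hfe ⊢
          linear_combination hfe
        rw [eventually_nhdsWithin_iff]
        filter_upwards [hE] with x hx hx0
        have hxne : (x : ℝ) ≠ 0 := hx0
        have := mul_eq_zero.mp hx
        rcases this with h | h
        · exact absurd (pow_eq_zero_iff (by omega)|>.mp h) hxne
        · linarith
      -- φ is continuous at 0, hence φ 0 = 0
      have hgc : ContinuousAt g 0 := hg.continuousAt
      have hgc' : ContinuousAt (deriv g) 0 := by
        obtain ⟨r, hr, hball⟩ := Metric.eventually_nhds_iff_ball.mp hg.eventually_analyticAt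
        have : AnalyticOnNhd ℝ g (Metric.ball 0 r) := fun z hz => hball z hz
        exact (this.deriv 0 (Metric.mem_ball_self hr)).continuousAt
      have hneg : ContinuousAt (fun x : ℝ => -2 * x) 0 := by fun_prop
      have hcφ : ContinuousAt φ 0 := by
        have h1 : ContinuousAt (fun x : ℝ => g (-2 * x)) 0 := by
          have := ((by simpa using hgc : ContinuousAt g ((-2:ℝ) * 0)).comp
            (by fun_prop : ContinuousAt (fun x : ℝ => -2 * x) 0))
          exact this
        have h2 : ContinuousAt (fun x : ℝ => deriv g (-2 * x)) 0 := by
          have := ((by simpa using hgc' : ContinuousAt (deriv g) ((-2:ℝ) * 0)).comp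
            (by fun_prop : ContinuousAt (fun x : ℝ => -2 * x) 0))
          exact this
        rw [hφ]
        exact (((continuousAt_const.mul hgc).add (continuousAt_id.mul hgc')).mul
            (hgc.add (continuousAt_const.mul h1))).add
          (((continuousAt_const.mul h1).add
            ((continuousAt_const.mul continuousAt_id).mul h2)).mul hgc)
      have hzero : φ 0 = 0 := by
        have t1 : Tendsto φ (nhdsWithin (0:ℝ) {0}ᶜ) (nhds (φ 0)) :=
          hcφ.continuousWithinAt.tendsto
        have t2 : Tendsto φ (nhdsWithin (0:ℝ) {0}ᶜ) (nhds 0) :=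
          Tendsto.congr' (Filter.EventuallyEq.symm hφ0) tendsto_const_nhds
        exact tendsto_nhds_unique t1 t2
      -- but φ 0 ≠ 0
      have hval : φ 0 = (n : ℝ) * g 0 ^ 2 * (1 - (-2) ^ (m + 1)) := by
        rw [hφ]
        push_cast [hnm]
        ring
      rw [hval] at hzero
      have h1 : ((n : ℝ)) ≠ 0 := by positivity
      have h2 : g 0 ^ 2 ≠ 0 := pow_ne_zero _ hg0
      have h3 : (1 : ℝ) - (-2) ^ (m + 1) ≠ 0 := by
        intro h
        have habs : |(-2 : ℝ) ^ (m + 1)| = 2 ^ (m + 1) := by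
          rw [abs_pow]; norm_num
        have h4 : ((-2 : ℝ)) ^ (m + 1) = 1 := by linarith
        rw [h4] at habs
        simp at habs
        have : (2:ℝ) ^ (m+1) ≥ 2 ^ 1 := by
          apply pow_le_pow_right₀ (by norm_num) (by omega)
        rw [← habs] at this
        norm_num at this
      exact (mul_ne_zero (mul_ne_zero h1 h2) h3) hzero
  -- identity theorem
  intro x
  have hU : AnalyticOnNhd ℝ G Set.univ := fun z _ => han z
  have := hU.eqOn_zero_of_preconnected_of_eventuallyEq_zero isPreconnected_univ
    (Set.mem_univ (0:ℝ)) key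
  exact this (Set.mem_univ x)
end
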